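/- For every integer k ≥ 1, setting μ = 18 + 2k, the following inequality of rational numbers holds: (19/22 − 3/2)² + (23/22 − 3/2)² + (27/22 − 3/2)² + (29/22 − 3/2)² + (31/22 − 3/2)² + (3/2 − 3/2)² + (35/22 − 3/2)² + (37/22 − 3/2)² + (39/22 − 3/2)² + (43/22 − 3/2)² + (47/22 − 3/2)² + ∑_{l=1}^{2k+7} ((l + 2k + 8)/(2(k+4)) − 3/2)² ≤ (μ/12)·(47/22 − 19/22). -/

import Mathlib

/-!
Writing `m = k + 4`, the `l`-th term of the sum is `((l - m) / (2m))²` with `l` running over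
`1, …, 2m - 1`, so the sum is `(m - 1)(2m - 1) / (12m)`. The eleven constant terms add up to
`16/11`, and the inequality becomes `0 ≤ 6m² - 19m - 11`, which holds for `m ≥ 4`.
-/

open Finset

variable {K : Type*} [Field K] [CharZero K]

lemma sum_Icc_sub_sq (N : ℕ) (c : K) :
    ∑ l ∈ Icc 1 N, ((l : K) - c) ^ 2
      = N * (N + 1) * (2 * N + 1) / 6 - c * N * (N + 1) + N * c ^ 2 := by
  induction N with
  | zero => simp
  | succ N ih =>
    rw [sum_Icc_succ_top (by omega), ih]
    push_cast
    ring

lemma sum_Icc_sub_center_sq (n : ℕ) :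
    ∑ l ∈ Icc 1 (2 * n + 1), ((l : K) - (n + 1)) ^ 2
      = (n : K) * (n + 1) * (2 * n + 1) / 3 := by
  rw [sum_Icc_sub_sq]
  push_cast
  ring

theorem stmt_12_general (k : ℕ) :
    ((19/22 : ℚ) - 3/2) ^ 2 +
      ((23/22 : ℚ) - 3/2) ^ 2 +
      ((27/22 : ℚ) - 3/2) ^ 2 +
      ((29/22 : ℚ) - 3/2) ^ 2 +
      ((31/22 : ℚ) - 3/2) ^ 2 +
      ((3/2 : ℚ) - 3/2) ^ 2 +
      ((35/22 : ℚ) - 3/2) ^ 2 +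
      ((37/22 : ℚ) - 3/2) ^ 2 +
      ((39/22 : ℚ) - 3/2) ^ 2 +
      ((43/22 : ℚ) - 3/2) ^ 2 +
      ((47/22 : ℚ) - 3/2) ^ 2 +
      ∑ l ∈ Finset.Icc 1 (2 * k + 7), (((l : ℚ) + 2 * (k : ℚ) + 8) / (2 * ((k : ℚ) + 4)) - 3/2) ^ 2
    ≤ ((18 + 2 * (k : ℚ)) / 12) * (47/22 - 19/22) := by
  have hterm : ∀ l : ℕ, (((l : ℚ) + 2 * k + 8) / (2 * (k + 4)) - 3/2) ^ 2
      = ((l : ℚ) - ((k + 3 : ℕ) + 1)) ^ 2 / (2 * (k + 4)) ^ 2 := by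
    intro l
    push_cast
    field_simp
    ring
  have hsum : ∑ l ∈ Icc 1 (2 * k + 7), (((l : ℚ) + 2 * k + 8) / (2 * (k + 4)) - 3/2) ^ 2
      = ((k : ℚ) + 3) * (2 * k + 7) / (12 * (k + 4)) := by
    simp_rw [hterm, ← sum_div, show 2 * k + 7 = 2 * (k + 3) + 1 by ring, sum_Icc_sub_center_sq]
    push_cast
    field_simp
    ring
  have hgap : (18 + 2 * (k : ℚ)) / 12 * (14/11) - (16/11 + (k + 3) * (2 * k + 7) / (12 * (k + 4)))
      = (6 * (k + 4) ^ 2 - 19 * (k + 4) - 11) / (132 * (k + 4)) := by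
    field_simp
    ring
  rw [hsum]
  norm_num only
  rw [← sub_nonneg, hgap]
  exact div_nonneg (by nlinarith) (by positivity)

theorem stmt_12 (k : ℕ) (hk : 1 ≤ k) :
    ((19/22 : ℚ) - 3/2) ^ 2 +
      ((23/22 : ℚ) - 3/2) ^ 2 +
      ((27/22 : ℚ) - 3/2) ^ 2 +
      ((29/22 : ℚ) - 3/2) ^ 2 +
      ((31/22 : ℚ) - 3/2) ^ 2 +
      ((3/2 : ℚ) - 3/2) ^ 2 +
      ((35/22 : ℚ) - 3/2) ^ 2 +
      ((37/22 : ℚ) - 3/2) ^ 2 +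
      ((39/22 : ℚ) - 3/2) ^ 2 +
      ((43/22 : ℚ) - 3/2) ^ 2 +
      ((47/22 : ℚ) - 3/2) ^ 2 +
      ∑ l ∈ Finset.Icc 1 (2 * k + 7), (((l : ℚ) + 2 * (k : ℚ) + 8) / (2 * ((k : ℚ) + 4)) - 3/2) ^ 2
    ≤ ((18 + 2 * (k : ℚ)) / 12) * (47/22 - 19/22) :=
  stmt_12_general k
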